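/- arXiv:0708.1892 — 3 statements merged into one kernel-verified Lean document; each statement's English description precedes it below -/
import Mathlib

section
/- Fix n, j and k ≥ 0, and suppose that, F₀^∞-almost surely, ∫_{A_{n,j}} R_k(f) Π(df) > 0. Then, F₀^∞-almost surely, E(L^{(n)}_{k+1,j} | ℱ_k) = L^{(n)}_{k,j} · (1 − h²(f_{k,A_{n,j}}, f₀)/2), where ℱ_k is the σ-algebra generated by X_1, …, X_k and f_{k,A_{n,j}}(x) = ∫_{A_{n,j}} f(x) R_k(f) Π(df) / ∫_{A_{n,j}} R_k(f) Π(df) is the predictive density restricted to A_{n,j} (for k = 0 it is f_{0,A_{n,j}}(x) = ∫_{A_{n,j}} f(x) Π(df)/Π(A_{n,j})). -/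
/-!
Given `ℱ_k`, the ratio `R_k(f)` is frozen and the next observation `X_k` is independent of `ℱ_k`
with law `F₀ = f₀ · λ`, so `E(L_{k+1} | ℱ_k) = ∫ (N(z) / f₀(z))^{1/2} f₀(z) λ(dz) = ∫ √N √f₀ dλ`,
where `N(z) = ∫_A f(z) R_k(f) Π(df)`. Since `N / L_k²` is a probability density (Fubini), and for
two probability densities `h²(p, q) = 2 - 2 ∫ √p √q`, this equals `L_k (1 - h²(N / L_k², f₀) / 2)`.
Integrability of `L_{k+1}` comes from `E R_m(f) ≤ 1` for every `f`, by independence.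
-/

open MeasureTheory ProbabilityTheory Filter
open scoped ENNReal

noncomputable def hellinger {X : Type*} [MeasurableSpace X] (lam : Measure X)
    (f g : X → ℝ) : ℝ :=
  Real.sqrt (∫ x, (Real.sqrt (f x) - Real.sqrt (g x)) ^ 2 ∂lam)

section Hellinger

variable {X : Type*} [MeasurableSpace X] {lam : Measure X}

lemma integrable_sqrt_mul_sqrt {p q : X → ℝ} (hp : Integrable p lam) (hq : Integrable q lam)
    (hp0 : ∀ x, 0 ≤ p x) (hq0 : ∀ x, 0 ≤ q x) :
    Integrable (fun x => √(p x) * √(q x)) lam := by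
  refine ((hp.add hq).div_const 2).mono'
    ((Real.continuous_sqrt.comp_aestronglyMeasurable hp.aestronglyMeasurable).mul
      (Real.continuous_sqrt.comp_aestronglyMeasurable hq.aestronglyMeasurable))
    (.of_forall fun x => ?_)
  rw [Real.norm_of_nonneg (by positivity), Pi.add_apply]
  nlinarith [Real.sq_sqrt (hp0 x), Real.sq_sqrt (hq0 x), sq_nonneg (√(p x) - √(q x))]

lemma hellinger_sq_eq_two_sub {p q : X → ℝ} (hp0 : ∀ x, 0 ≤ p x) (hq0 : ∀ x, 0 ≤ q x)
    (hp1 : ∫ x, p x ∂lam = 1) (hq1 : ∫ x, q x ∂lam = 1) :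
    hellinger lam p q ^ 2 = 2 - 2 * ∫ x, √(p x) * √(q x) ∂lam := by
  have hp := integrable_of_integral_eq_one hp1
  have hq := integrable_of_integral_eq_one hq1
  have hpq : Integrable (fun x => p x + q x) lam := hp.add hq
  have hexpand : ∀ x, (√(p x) - √(q x)) ^ 2 = p x + q x - 2 * (√(p x) * √(q x)) := fun x => by
    rw [sub_sq, Real.sq_sqrt (hp0 x), Real.sq_sqrt (hq0 x)]
    ring
  rw [hellinger, Real.sq_sqrt (integral_nonneg fun x => sq_nonneg _)]
  simp_rw [hexpand]
  rw [integral_sub hpq ((integrable_sqrt_mul_sqrt hp hq hp0 hq0).const_mul 2),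
    integral_add hp hq, integral_const_mul, hp1, hq1]
  ring

lemma integral_sqrt_div_withDensity {p q : X → ℝ} (hq : Measurable q) (hq0 : ∀ x, 0 ≤ q x) :
    ∫ x, √(p x / q x) ∂(lam.withDensity fun x => ENNReal.ofReal (q x)) =
      ∫ x, √(p x) * √(q x) ∂lam := by
  rw [integral_withDensity_eq_integral_toReal_smul hq.ennreal_ofReal
    (.of_forall fun _ => ENNReal.ofReal_lt_top)]
  refine integral_congr_ae (.of_forall fun x => ?_)
  dsimp only
  rw [ENNReal.toReal_ofReal (hq0 x), smul_eq_mul, Real.sqrt_div' _ (hq0 x)]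
  nth_rewrite 1 [← Real.mul_self_sqrt (hq0 x)]
  rcases eq_or_ne √(q x) 0 with h | h
  · simp [h]
  · field_simp

end Hellinger

section Mixture

variable {X F : Type*} [MeasurableSpace X] [MeasurableSpace F] {lam : Measure X} [SigmaFinite lam]
  {μ : Measure F} {ev : F → X → ℝ}

lemma integrable_density_mul_weight (hev : Measurable (Function.uncurry ev))
    (hdens : ∀ f, (∀ x, 0 ≤ ev f x) ∧ ∫ x, ev f x ∂lam = 1)
    {w : F → ℝ} (hwm : Measurable w) (hw : Integrable w μ) :
    Integrable (fun q : F × X => ev q.1 q.2 * w q.1) (μ.prod lam) := by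
  have hm : Measurable fun q : F × X => ev q.1 q.2 * w q.1 := by fun_prop
  rw [integrable_prod_iff hm.aestronglyMeasurable]
  refine ⟨.of_forall fun f => (integrable_of_integral_eq_one (hdens f).2).mul_const (w f),
    hw.norm.congr (.of_forall fun f => ?_)⟩
  simp_rw [norm_mul, Real.norm_of_nonneg ((hdens f).1 _)]
  rw [integral_mul_const, (hdens f).2, one_mul]

lemma integral_integral_density_mul_weight [SFinite μ] (hev : Measurable (Function.uncurry ev))
    (hdens : ∀ f, (∀ x, 0 ≤ ev f x) ∧ ∫ x, ev f x ∂lam = 1)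
    {w : F → ℝ} (hwm : Measurable w) (hw : Integrable w μ) :
    ∫ x, ∫ f, ev f x * w f ∂μ ∂lam = ∫ f, w f ∂μ := by
  rw [← integral_integral_swap (integrable_density_mul_weight hev hdens hwm hw)]
  congr 1 with f
  rw [integral_mul_const, (hdens f).2, one_mul]

lemma integral_sqrt_mixture_div_eq_hellinger [SFinite μ]
    (hev : Measurable (Function.uncurry ev))
    (hdens : ∀ f, (∀ x, 0 ≤ ev f x) ∧ ∫ x, ev f x ∂lam = 1)
    {f₀ : X → ℝ} (hf₀m : Measurable f₀) (hf₀0 : ∀ x, 0 ≤ f₀ x) (hf₀1 : ∫ x, f₀ x ∂lam = 1)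
    {R : F → ℝ} (hRm : Measurable R) (hR0 : ∀ f, 0 ≤ R f) (hD : 0 < ∫ f, R f ∂μ) :
    ∫ z, √(∫ f, R f * (ev f z / f₀ z) ∂μ) ∂(lam.withDensity fun x => ENNReal.ofReal (f₀ x)) =
      √(∫ f, R f ∂μ) *
        (1 - hellinger lam (fun x => (∫ f, ev f x * R f ∂μ) / ∫ f, R f ∂μ) f₀ ^ 2 / 2) := by
  set D := ∫ f, R f ∂μ
  set N : X → ℝ := fun x => ∫ f, ev f x * R f ∂μ
  have hN0 : ∀ x, 0 ≤ N x := fun x => integral_nonneg fun f => mul_nonneg ((hdens f).1 x) (hR0 f)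
  have hN1 : ∫ x, N x / D ∂lam = 1 := by
    rw [integral_div, integral_integral_density_mul_weight hev hdens hRm
      (Integrable.of_integral_ne_zero hD.ne'), div_self hD.ne']
  have hratio : ∀ z, ∫ f, R f * (ev f z / f₀ z) ∂μ = N z / f₀ z := fun z => by
    simp_rw [mul_div_assoc', mul_comm (R _)]
    exact integral_div _ _
  calc ∫ z, √(∫ f, R f * (ev f z / f₀ z) ∂μ) ∂(lam.withDensity fun x => ENNReal.ofReal (f₀ x))
      = ∫ z, √(N z / f₀ z) ∂(lam.withDensity fun x => ENNReal.ofReal (f₀ x)) := by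
        simp_rw [hratio]
    _ = ∫ z, √(N z) * √(f₀ z) ∂lam := integral_sqrt_div_withDensity hf₀m hf₀0
    _ = √D * ∫ z, √(N z / D) * √(f₀ z) ∂lam := by
        rw [← integral_const_mul]
        congr 1 with z
        rw [Real.sqrt_div' _ hD.le]
        field_simp
    _ = √D * (1 - hellinger lam (fun x => N x / D) f₀ ^ 2 / 2) := by
        rw [hellinger_sq_eq_two_sub (fun x => div_nonneg (hN0 x) hD.le) hf₀0 hN1 hf₀1]
        ring

end Mixture

section LikelihoodRatio

variable {X Ω : Type*} [MeasurableSpace X] [MeasurableSpace Ω] {lam : Measure X} {f₀ : X → ℝ}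

lemma lintegral_ofReal_div_withDensity_le {g : X → ℝ} (hg : Measurable g) (hf₀m : Measurable f₀)
    (hf₀0 : ∀ x, 0 ≤ f₀ x) :
    ∫⁻ x, ENNReal.ofReal (g x / f₀ x) ∂(lam.withDensity fun x => ENNReal.ofReal (f₀ x)) ≤
      ∫⁻ x, ENNReal.ofReal (g x) ∂lam := by
  have hgf : Measurable fun x => ENNReal.ofReal (g x / f₀ x) := (hg.div hf₀m).ennreal_ofReal
  rw [lintegral_withDensity_eq_lintegral_mul _ hf₀m.ennreal_ofReal hgf]
  refine lintegral_mono fun x => ?_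
  rw [Pi.mul_apply, ← ENNReal.ofReal_mul (hf₀0 x)]
  rcases eq_or_ne (f₀ x) 0 with h | h
  · simp [h]
  · rw [mul_div_cancel₀ _ h]

variable {ν : Measure Ω} {Xs : ℕ → Ω → X}

lemma lintegral_prod_ofReal_div_le_one (hXmeas : ∀ i, Measurable (Xs i)) (hindep : iIndepFun Xs ν)
    (hlaw : ∀ i, ν.map (Xs i) = lam.withDensity fun x => ENNReal.ofReal (f₀ x))
    (hf₀m : Measurable f₀) (hf₀0 : ∀ x, 0 ≤ f₀ x) {g : X → ℝ} (hg : Measurable g)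
    (hg0 : ∀ x, 0 ≤ g x) (hg1 : ∫ x, g x ∂lam = 1) (s : Finset ℕ) :
    ∫⁻ ω, ∏ i ∈ s, ENNReal.ofReal (g (Xs i ω) / f₀ (Xs i ω)) ∂ν ≤ 1 := by
  have hgf : Measurable fun x => ENNReal.ofReal (g x / f₀ x) := (hg.div hf₀m).ennreal_ofReal
  rw [lintegral_prod_eq_prod_lintegral_of_indepFun s
    (fun i ω => ENNReal.ofReal (g (Xs i ω) / f₀ (Xs i ω))) (hindep.comp _ fun _ => hgf)
    fun i => hgf.comp (hXmeas i)]
  refine Finset.prod_le_one' fun i _ => ?_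
  calc ∫⁻ ω, ENNReal.ofReal (g (Xs i ω) / f₀ (Xs i ω)) ∂ν
      = ∫⁻ x, ENNReal.ofReal (g x / f₀ x) ∂(ν.map (Xs i)) := (lintegral_map hgf (hXmeas i)).symm
    _ ≤ ∫⁻ x, ENNReal.ofReal (g x) ∂lam := hlaw i ▸ lintegral_ofReal_div_withDensity_le hg hf₀m hf₀0
    _ = 1 := by
        rw [← ofReal_integral_eq_lintegral_ofReal (integrable_of_integral_eq_one hg1)
          (.of_forall hg0), hg1, ENNReal.ofReal_one]

lemma integrable_sqrt_integral_prod_div {F : Type*} [MeasurableSpace F] {ev : F → X → ℝ}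
    (hev : Measurable (Function.uncurry ev))
    (hdens : ∀ f, (∀ x, 0 ≤ ev f x) ∧ ∫ x, ev f x ∂lam = 1) (μ : Measure F) [IsFiniteMeasure μ]
    (hXmeas : ∀ i, Measurable (Xs i)) (hindep : iIndepFun Xs ν)
    (hlaw : ∀ i, ν.map (Xs i) = lam.withDensity fun x => ENNReal.ofReal (f₀ x))
    (hf₀m : Measurable f₀) (hf₀0 : ∀ x, 0 ≤ f₀ x) (s : Finset ℕ) :
    Integrable (fun ω => √(∫ f, ∏ i ∈ s, ev f (Xs i ω) / f₀ (Xs i ω) ∂μ)) ν := by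
  have : IsProbabilityMeasure ν := hindep.isProbabilityMeasure
  set H : Ω × F → ℝ := fun q => ∏ i ∈ s, ev q.2 (Xs i q.1) / f₀ (Xs i q.1)
  have hHm : Measurable H := by fun_prop
  have hH0 : ∀ q, 0 ≤ H q := fun q =>
    Finset.prod_nonneg fun i _ => div_nonneg ((hdens q.2).1 _) (hf₀0 _)
  have hH : Integrable H (ν.prod μ) := by
    refine ⟨hHm.aestronglyMeasurable, ?_⟩
    rw [hasFiniteIntegral_iff_ofReal (.of_forall hH0),
      lintegral_prod_symm _ hHm.ennreal_ofReal.aemeasurable]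
    calc ∫⁻ f, ∫⁻ ω, ENNReal.ofReal (H (ω, f)) ∂ν ∂μ ≤ ∫⁻ _, 1 ∂μ := lintegral_mono fun f => by
          simp_rw [H, ENNReal.ofReal_prod_of_nonneg fun i _ =>
            div_nonneg ((hdens f).1 _) (hf₀0 _)]
          exact lintegral_prod_ofReal_div_le_one hXmeas hindep hlaw hf₀m hf₀0
            hev.of_uncurry_left (hdens f).1 (hdens f).2 s
      _ < ∞ := by simp
  refine ((integrable_const 1).add hH.integral_prod_left).mono'
    (Real.continuous_sqrt.comp_stronglyMeasurable
      hHm.stronglyMeasurable.integral_prod_right').aestronglyMeasurable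
    (.of_forall fun ω => ?_)
  have ht : 0 ≤ ∫ f, H (ω, f) ∂μ := integral_nonneg fun f => hH0 _
  change ‖√(∫ f, H (ω, f) ∂μ)‖ ≤ 1 + ∫ f, H (ω, f) ∂μ
  rw [Real.norm_of_nonneg (Real.sqrt_nonneg _)]
  nlinarith [Real.sq_sqrt ht, Real.sqrt_nonneg (∫ f, H (ω, f) ∂μ)]

end LikelihoodRatio

section Freezing

variable {α β γ : Type*} {mα : MeasurableSpace α} {mβ : MeasurableSpace β}
  {mγ : MeasurableSpace γ} {μ : Measure α} [IsFiniteMeasure μ] {Y : α → β} {Z : α → γ}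

lemma condExp_comp_prodMk_ae_eq_of_indepFun (hY : Measurable Y) (hZ : Measurable Z)
    (hind : IndepFun Y Z μ) {φ : β × γ → ℝ} (hφ : StronglyMeasurable φ)
    (hint : Integrable (fun a => φ (Y a, Z a)) μ) :
    μ[fun a => φ (Y a, Z a) | mβ.comap Y] =ᵐ[μ] fun a => ∫ z, φ (Y a, z) ∂(μ.map Z) := by
  have hmap : μ.map (fun a => (Y a, Z a)) = (μ.map Y).prod (μ.map Z) :=
    (indepFun_iff_map_prod_eq_prod_map_map hY.aemeasurable hZ.aemeasurable).mp hind
  have hφint : Integrable φ ((μ.map Y).prod (μ.map Z)) := by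
    rw [← hmap]
    exact (integrable_map_measure hφ.aestronglyMeasurable (hY.prodMk hZ).aemeasurable).mpr hint
  set g : β → ℝ := fun y => ∫ z, φ (y, z) ∂(μ.map Z)
  have hgm : StronglyMeasurable g := hφ.integral_prod_right'
  have hgY : Integrable (fun a => g (Y a)) μ :=
    (integrable_map_measure hgm.aestronglyMeasurable hY.aemeasurable).mp
      hφint.integral_prod_left
  symm
  refine ae_eq_condExp_of_forall_setIntegral_eq hY.comap_le hint (fun _ _ _ => hgY.integrableOn) ?_
    (hgm.comp_measurable (comap_measurable Y)).aestronglyMeasurable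
  rintro _ ⟨B, hB, rfl⟩ _
  calc ∫ a in Y ⁻¹' B, g (Y a) ∂μ = ∫ y in B, g y ∂(μ.map Y) :=
        (setIntegral_map hB hgm.aestronglyMeasurable hY.aemeasurable).symm
    _ = ∫ p in B ×ˢ Set.univ, φ p ∂((μ.map Y).prod (μ.map Z)) := by
        rw [setIntegral_prod _ hφint.integrableOn, Measure.restrict_univ]
    _ = ∫ a in Y ⁻¹' B, φ (Y a, Z a) ∂μ := by
        rw [← hmap, setIntegral_map (hB.prod MeasurableSet.univ) hφ.aestronglyMeasurable
          (hY.prodMk hZ).aemeasurable]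
        simp [Set.preimage, Set.mem_prod]

end Freezing

lemma MeasurableSpace.iSup_comap_eq_comap_pi {Ω X ι : Type*} [MeasurableSpace X]
    (Xs : ι → Ω → X) (s : Finset ι) :
    ⨆ i ∈ s, MeasurableSpace.comap (Xs i) inferInstance =
      MeasurableSpace.comap (fun ω (i : s) => Xs i ω) MeasurableSpace.pi := by
  simp only [MeasurableSpace.pi, MeasurableSpace.comap_iSup, MeasurableSpace.comap_comp]
  rw [iSup_subtype']
  rfl

lemma ProbabilityTheory.iIndepFun.condExp_iSup_comap_ae_eq_integral_map {Ω X ι : Type*}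
    {mΩ : MeasurableSpace Ω} [MeasurableSpace X] {ν : Measure Ω} {Xs : ι → Ω → X}
    (hXmeas : ∀ i, Measurable (Xs i)) (hindep : iIndepFun Xs ν) {s : Finset ι} {j : ι}
    (hj : j ∉ s) {φ : (s → X) × X → ℝ} (hφ : StronglyMeasurable φ)
    (hint : Integrable (fun ω => φ (fun i => Xs i ω, Xs j ω)) ν) :
    ν[fun ω => φ (fun i => Xs i ω, Xs j ω) |
        ⨆ i ∈ s, MeasurableSpace.comap (Xs i) inferInstance] =ᵐ[ν]
      fun ω => ∫ z, φ (fun i => Xs i ω, z) ∂(ν.map (Xs j)) := by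
  have := hindep.isProbabilityMeasure
  have hindep' : IndepFun (fun ω (i : s) => Xs i ω) (Xs j) ν :=
    (hindep.indepFun_finset s {j} (Finset.disjoint_singleton_right.mpr hj) hXmeas).comp
      measurable_id (measurable_pi_apply (⟨j, Finset.mem_singleton_self j⟩ : ({j} : Finset ι)))
  rw [MeasurableSpace.iSup_comap_eq_comap_pi]
  exact condExp_comp_prodMk_ae_eq_of_indepFun
    (measurable_pi_lambda (fun ω (i : s) => Xs i ω) fun i => hXmeas i) (hXmeas j) hindep' hφ hint

/-- With `L_k = (∫_A R_k(f) Π(df))^{1/2}`, `R_k(f) = Π_{i<k} f(X_i)/f₀(X_i)`, and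
`f_{k,A}(x) = ∫_A f(x) R_k(f) Π(df) / ∫_A R_k(f) Π(df)` the predictive density
restricted to `A`, if a.s. `∫_A R_k(f) Π(df) > 0` then a.s.
`E(L_{k+1} | ℱ_k) = L_k (1 − h²(f_{k,A}, f₀)/2)`, where `ℱ_k = σ(X_0, …, X_{k-1})`. -/
theorem stmt3 {X : Type*} [MeasurableSpace X] [TopologicalSpace X] [PolishSpace X]
    [BorelSpace X] (lam : Measure X) [SigmaFinite lam]
    {F : Type*} [MeasurableSpace F] (ev : F → X → ℝ)
    (hev : Measurable (Function.uncurry ev))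
    (hdens : ∀ f, (∀ x, 0 ≤ ev f x) ∧ ∫ x, ev f x ∂lam = 1)
    (Pr : Measure F) [IsProbabilityMeasure Pr]
    (f₀ : X → ℝ) (hf₀ : Measurable f₀ ∧ (∀ x, 0 ≤ f₀ x) ∧ ∫ x, f₀ x ∂lam = 1)
    {Ω : Type*} [MeasurableSpace Ω] (ν : Measure Ω) [IsProbabilityMeasure ν]
    (Xs : ℕ → Ω → X) (hXmeas : ∀ i, Measurable (Xs i))
    (hindep : iIndepFun Xs ν)
    (hlaw : ∀ i, Measure.map (Xs i) ν = lam.withDensity (fun x => ENNReal.ofReal (f₀ x)))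
    (A : Set F) (hAmeas : MeasurableSet A) (hApos : 0 < Pr A)
    (k : ℕ)
    (hpos : ∀ᵐ ω ∂ν,
      0 < ∫ f in A, (∏ i ∈ Finset.range k, ev f (Xs i ω) / f₀ (Xs i ω)) ∂Pr)
    -- `ℱ_k`, the σ-algebra generated by the first `k` observations
    (mk : MeasurableSpace Ω)
    (hmk : mk = ⨆ i ∈ Finset.range k, MeasurableSpace.comap (Xs i) inferInstance) :
    ν[fun ω => Real.sqrt (∫ f in A,
        (∏ i ∈ Finset.range (k + 1), ev f (Xs i ω) / f₀ (Xs i ω)) ∂Pr) | mk]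
      =ᵐ[ν] fun ω =>
        Real.sqrt (∫ f in A,
            (∏ i ∈ Finset.range k, ev f (Xs i ω) / f₀ (Xs i ω)) ∂Pr) *
          (1 - hellinger lam
              (fun x =>
                (∫ f in A,
                    ev f x * ∏ i ∈ Finset.range k, ev f (Xs i ω) / f₀ (Xs i ω) ∂Pr) /
                  ∫ f in A, (∏ i ∈ Finset.range k, ev f (Xs i ω) / f₀ (Xs i ω)) ∂Pr)
              f₀ ^ 2 / 2) := by
  subst hmk
  obtain ⟨hf₀m, hf₀0, hf₀1⟩ := hf₀
  -- `L_{k+1}` as a function of the first `k` observations and of `X_k`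
  let φ : (Finset.range k → X) × X → ℝ := fun p =>
    √(∫ f in A, (∏ i, ev f (p.1 i) / f₀ (p.1 i)) * (ev f p.2 / f₀ p.2) ∂Pr)
  have hφ : StronglyMeasurable φ := by
    have hG : Measurable fun q : F × (Finset.range k → X) × X =>
        (∏ i, ev q.1 (q.2.1 i) / f₀ (q.2.1 i)) * (ev q.1 q.2.2 / f₀ q.2.2) := by
      fun_prop
    exact Real.continuous_sqrt.comp_stronglyMeasurable hG.stronglyMeasurable.integral_prod_left'
  have hprod : ∀ f ω, ∏ i : Finset.range k, ev f (Xs i ω) / f₀ (Xs i ω) =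
      ∏ i ∈ Finset.range k, ev f (Xs i ω) / f₀ (Xs i ω) := fun f ω =>
    Finset.prod_coe_sort _ fun i => ev f (Xs i ω) / f₀ (Xs i ω)
  have hL : (fun ω => √(∫ f in A, ∏ i ∈ Finset.range (k + 1), ev f (Xs i ω) / f₀ (Xs i ω) ∂Pr))
      = fun ω => φ (fun i => Xs i ω, Xs k ω) := by
    simp only [φ, hprod, Finset.prod_range_succ]
  rw [hL]
  refine (hindep.condExp_iSup_comap_ae_eq_integral_map hXmeas Finset.notMem_range_self hφ (hL ▸
    integrable_sqrt_integral_prod_div hev hdens _ hXmeas hindep hlaw hf₀m hf₀0 _)).trans ?_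
  filter_upwards [hpos] with ω hω
  rw [hlaw k]
  simpa only [φ, hprod] using integral_sqrt_mixture_div_eq_hellinger hev hdens hf₀m hf₀0 hf₀1
    (by fun_prop) (fun f => Finset.prod_nonneg fun i _ => div_nonneg ((hdens f).1 _) (hf₀0 _)) hω
end

section
/- Fix n and j, and suppose the measurable set A_{n,j} ⊆ 𝔽 satisfies: every f ∈ A_{n,j} has h(f, f₀) > ε_n, and A_{n,j} is contained in a Hellinger ball of radius δ_n < ε_n centered at some f_j ∈ A_{n,j}. Set γ_n = ε_n − δ_n. Then E(L^{(n)}_{n+1,j}) ≤ √(Π(A_{n,j})) · (1 − γ_n²/2)^{n+1}, where the expectation is under F₀^∞. -/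
open MeasureTheory ProbabilityTheory Filter
open scoped ENNReal

/-!
Write `L_k = ∫_A R_k dΠ`. Integrating out the `(k+1)`-st observation, which is independent of
the first `k`, turns `E √L_{k+1}` into `E ∫ √(g f₀) dλ` with `g = ∫_A R_k f Π(df)`, a mixture of
the densities of `A` of total mass `L_k`. The Hellinger affinity `∫ √(p q) dλ` is concave in `p`
(Cauchy–Schwarz), so the normalised mixture stays in the `δ`-ball around `f_c`; since the
Hellinger distance is the `L²` distance of root densities, the triangle inequality puts it at
distance `≥ ε - δ` from `f₀`, i.e. its affinity with `f₀` is at most `1 - (ε - δ)² / 2`.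
So every observation multiplies `E √L` by at most this factor, starting from `√Π(A)`.
-/

open scoped RealInnerProductSpace

theorem ENNReal.ofReal_sqrt_eq_rpow (x : ℝ) :
    ENNReal.ofReal √x = ENNReal.ofReal x ^ (1 / 2 : ℝ) := by
  rcases le_or_gt 0 x with hx | hx
  · rw [Real.sqrt_eq_rpow, ENNReal.ofReal_rpow_of_nonneg hx (by norm_num)]
  · rw [Real.sqrt_eq_zero'.2 hx.le, ENNReal.ofReal_of_nonpos hx.le, ENNReal.ofReal_zero,
      ENNReal.zero_rpow_of_pos (by norm_num)]

theorem ENNReal.mul_rpow_half_div {a : ℝ≥0∞} (ha0 : a ≠ 0) (ha : a ≠ ⊤) (S : ℝ≥0∞) :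
    a * (S / a) ^ (1 / 2 : ℝ) = S ^ (1 / 2 : ℝ) * a ^ (1 / 2 : ℝ) := by
  have hsq : a = a ^ (1 / 2 : ℝ) * a ^ (1 / 2 : ℝ) := by
    rw [← ENNReal.rpow_add_of_nonneg _ _ (by norm_num) (by norm_num)]
    norm_num
  have h0 : a ^ (1 / 2 : ℝ) ≠ 0 := by simp [ha0]
  have htop : a ^ (1 / 2 : ℝ) ≠ ⊤ := ENNReal.rpow_ne_top_of_nonneg (by norm_num) ha
  rw [ENNReal.div_rpow_of_nonneg _ _ (by norm_num), mul_comm]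
  nth_rewrite 2 [hsq]
  rw [← mul_assoc, ENNReal.div_mul_cancel h0 htop]

theorem MeasureTheory.lintegral_rpow_le_rpow_lintegral {F : Type*} [MeasurableSpace F]
    {m : Measure F} [IsProbabilityMeasure m] {φ : F → ℝ≥0∞} (hφ : AEMeasurable φ m) {s : ℝ}
    (hs0 : 0 ≤ s) (hs1 : s ≤ 1) : ∫⁻ f, φ f ^ s ∂m ≤ (∫⁻ f, φ f ∂m) ^ s := by
  simpa using ENNReal.lintegral_mul_norm_pow_le (aemeasurable_const (b := 1)) hφ
    (sub_nonneg.2 hs1) hs0 (sub_add_cancel 1 s)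

theorem ProbabilityTheory.IndepFun.lintegral_comp_le {Ω E Y : Type*} [MeasurableSpace Ω]
    [MeasurableSpace E] [MeasurableSpace Y] {ν : Measure Ω} [IsFiniteMeasure ν] {V : Ω → E}
    {Z : Ω → Y} (hVZ : IndepFun V Z ν) (hV : Measurable V) (hZ : Measurable Z)
    {H : E × Y → ℝ≥0∞} (hH : Measurable H) {G : E → ℝ≥0∞} {c : ℝ≥0∞} (hc : c ≠ ⊤)
    (hHG : ∀ v, ∫⁻ y, H (v, y) ∂(ν.map Z) ≤ G v * c) :
    ∫⁻ ω, H (V ω, Z ω) ∂ν ≤ (∫⁻ ω, G (V ω) ∂ν) * c :=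
  calc ∫⁻ ω, H (V ω, Z ω) ∂ν
      = ∫⁻ v, ∫⁻ y, H (v, y) ∂(ν.map Z) ∂(ν.map V) := by
        rw [← lintegral_prod _ hH.aemeasurable,
          ← (indepFun_iff_map_prod_eq_prod_map_map hV.aemeasurable hZ.aemeasurable).1 hVZ,
          lintegral_map hH (hV.prodMk hZ)]
    _ ≤ ∫⁻ v, G v * c ∂(ν.map V) := lintegral_mono hHG
    _ = (∫⁻ v, G v ∂(ν.map V)) * c := lintegral_mul_const' c _ hc
    _ ≤ (∫⁻ ω, G (V ω) ∂ν) * c := mul_le_mul_left (lintegral_map_le _ _) c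

section Hellinger

variable {X : Type*} [MeasurableSpace X] {lam : Measure X} {p q r : X → ℝ}

def IsProbDensity (lam : Measure X) (p : X → ℝ) : Prop :=
  (∀ x, 0 ≤ p x) ∧ ∫ x, p x ∂lam = 1

noncomputable def affinity (lam : Measure X) (p q : X → ℝ) : ℝ :=
  ∫ x, √(p x) * √(q x) ∂lam

theorem IsProbDensity.integrable (hp : IsProbDensity lam p) : Integrable p lam := by
  by_contra h
  simpa [integral_undef h] using hp.2

theorem IsProbDensity.lintegral_ofReal (hp : IsProbDensity lam p) :
    ∫⁻ x, ENNReal.ofReal (p x) ∂lam = 1 := by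
  rw [← ofReal_integral_eq_lintegral_ofReal hp.integrable (.of_forall hp.1), hp.2,
    ENNReal.ofReal_one]

theorem IsProbDensity.memLp_sqrt (hp : IsProbDensity lam p) :
    MemLp (fun x => √(p x)) 2 lam := by
  refine (memLp_two_iff_integrable_sq
    (Real.continuous_sqrt.comp_aestronglyMeasurable hp.integrable.1)).2 ?_
  simpa only [Real.sq_sqrt (hp.1 _)] using hp.integrable

theorem IsProbDensity.inner_toLp_sqrt (hp : IsProbDensity lam p)
    (hq : IsProbDensity lam q) :
    ⟪hp.memLp_sqrt.toLp _, hq.memLp_sqrt.toLp _⟫ = affinity lam p q := by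
  rw [L2.inner_def, affinity]
  refine integral_congr_ae ?_
  filter_upwards [hp.memLp_sqrt.coeFn_toLp, hq.memLp_sqrt.coeFn_toLp] with x hpx hqx
  simp [hpx, hqx, mul_comm]

theorem IsProbDensity.norm_toLp_sqrt (hp : IsProbDensity lam p) :
    ‖hp.memLp_sqrt.toLp _‖ = 1 := by
  have h := hp.inner_toLp_sqrt hp
  rw [real_inner_self_eq_norm_sq, affinity] at h
  simp only [Real.mul_self_sqrt (hp.1 _), hp.2] at h
  rw [← Real.sqrt_sq (norm_nonneg _), h, Real.sqrt_one]

theorem IsProbDensity.hellinger_eq_norm_sub (hp : IsProbDensity lam p)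
    (hq : IsProbDensity lam q) :
    hellinger lam p q = ‖hp.memLp_sqrt.toLp _ - hq.memLp_sqrt.toLp _‖ := by
  rw [hellinger, ← Real.sqrt_sq (norm_nonneg _), ← real_inner_self_eq_norm_sq, L2.inner_def]
  congr 1
  refine integral_congr_ae ?_
  filter_upwards [Lp.coeFn_sub (hp.memLp_sqrt.toLp _) (hq.memLp_sqrt.toLp _),
    hp.memLp_sqrt.coeFn_toLp, hq.memLp_sqrt.coeFn_toLp] with x hx hpx hqx
  rw [hx, Pi.sub_apply, hpx, hqx, real_inner_self_eq_norm_sq, Real.norm_eq_abs, sq_abs]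

theorem IsProbDensity.hellinger_triangle (hp : IsProbDensity lam p)
    (hq : IsProbDensity lam q) (hr : IsProbDensity lam r) :
    hellinger lam p r ≤ hellinger lam p q + hellinger lam q r := by
  rw [hp.hellinger_eq_norm_sub hq, hp.hellinger_eq_norm_sub hr, hq.hellinger_eq_norm_sub hr]
  exact norm_sub_le_norm_sub_add_norm_sub _ _ _

theorem IsProbDensity.hellinger_sq (hp : IsProbDensity lam p)
    (hq : IsProbDensity lam q) :
    hellinger lam p q ^ 2 = 2 - 2 * affinity lam p q := by
  rw [hp.hellinger_eq_norm_sub hq, norm_sub_sq_real, hp.norm_toLp_sqrt, hq.norm_toLp_sqrt,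
    hp.inner_toLp_sqrt hq]
  ring

theorem hellinger_nonneg (p q : X → ℝ) : 0 ≤ hellinger lam p q := Real.sqrt_nonneg _

theorem hellinger_comm (p q : X → ℝ) : hellinger lam p q = hellinger lam q p := by
  rw [hellinger, hellinger]
  congr 2
  ext x
  ring

theorem affinity_nonneg (p q : X → ℝ) : 0 ≤ affinity lam p q :=
  integral_nonneg fun _ => mul_nonneg (Real.sqrt_nonneg _) (Real.sqrt_nonneg _)

theorem IsProbDensity.hellinger_le_iff (hp : IsProbDensity lam p) (hq : IsProbDensity lam q)
    {δ : ℝ} (hδ : 0 ≤ δ) : hellinger lam p q ≤ δ ↔ 1 - δ ^ 2 / 2 ≤ affinity lam p q := by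
  rw [← pow_le_pow_iff_left₀ (hellinger_nonneg p q) hδ two_ne_zero, hp.hellinger_sq hq]
  constructor <;> intro h <;> linarith

theorem IsProbDensity.le_hellinger_iff (hp : IsProbDensity lam p) (hq : IsProbDensity lam q)
    {γ : ℝ} (hγ : 0 ≤ γ) : γ ≤ hellinger lam p q ↔ affinity lam p q ≤ 1 - γ ^ 2 / 2 := by
  rw [← pow_le_pow_iff_left₀ hγ (hellinger_nonneg p q) two_ne_zero, hp.hellinger_sq hq]
  constructor <;> intro h <;> linarith

theorem IsProbDensity.hellinger_le_sqrt_two (hp : IsProbDensity lam p)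
    (hq : IsProbDensity lam q) : hellinger lam p q ≤ √2 := by
  rw [← pow_le_pow_iff_left₀ (hellinger_nonneg p q) (Real.sqrt_nonneg _) two_ne_zero,
    hp.hellinger_sq hq, Real.sq_sqrt zero_le_two]
  linarith [affinity_nonneg (lam := lam) p q]

theorem IsProbDensity.one_sub_sq_div_two_pos (hp : IsProbDensity lam p)
    (hq : IsProbDensity lam q) {ε δ : ℝ} (hδ : 0 ≤ δ) (hδε : δ ≤ ε)
    (hε : ε < hellinger lam p q) : 0 < 1 - (ε - δ) ^ 2 / 2 := by
  have := hp.hellinger_le_sqrt_two hq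
  nlinarith [Real.sq_sqrt (zero_le_two (α := ℝ)), Real.sqrt_nonneg 2]

theorem IsProbDensity.ofReal_affinity (hp : IsProbDensity lam p) (hq : IsProbDensity lam q) :
    ENNReal.ofReal (affinity lam p q)
      = ∫⁻ x, ENNReal.ofReal (p x) ^ (1 / 2 : ℝ) * ENNReal.ofReal (q x) ^ (1 / 2 : ℝ) ∂lam := by
  have hint : Integrable (fun x => √(p x) * √(q x)) lam :=
    hp.memLp_sqrt.integrable_mul hq.memLp_sqrt
  rw [affinity, ofReal_integral_eq_lintegral_ofReal hint
    (.of_forall fun _ => mul_nonneg (Real.sqrt_nonneg _) (Real.sqrt_nonneg _))]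
  simp only [ENNReal.ofReal_mul (Real.sqrt_nonneg _), ENNReal.ofReal_sqrt_eq_rpow]

end Hellinger

section Mixture

variable {X F : Type*} [MeasurableSpace F] {ev : F → X → ℝ}

noncomputable def mixture (ev : F → X → ℝ) (m : Measure F) (x : X) : ℝ≥0∞ :=
  ∫⁻ f, ENNReal.ofReal (ev f x) ∂m

theorem ofReal_mul_rpow_lintegral_div_eq_mixture (m : Measure F)
    {P : F → ℝ} (hP : Measurable P) (hP0 : ∀ f, 0 ≤ P f) (x : X) {a : ℝ} (ha : 0 ≤ a) :
    ENNReal.ofReal a * (∫⁻ f, ENNReal.ofReal (P f * (ev f x / a)) ∂m) ^ (1 / 2 : ℝ)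
      = mixture ev (m.withDensity fun f => ENNReal.ofReal (P f)) x ^ (1 / 2 : ℝ)
          * ENNReal.ofReal a ^ (1 / 2 : ℝ) := by
  rcases ha.eq_or_lt with ha0 | hapos
  · simp [← ha0]
  have hratio : ∫⁻ f, ENNReal.ofReal (P f * (ev f x / a)) ∂m
      = mixture ev (m.withDensity fun f => ENNReal.ofReal (P f)) x / ENNReal.ofReal a := by
    rw [mixture, lintegral_withDensity_eq_lintegral_mul_non_measurable _ hP.ennreal_ofReal
      (.of_forall fun _ => ENNReal.ofReal_lt_top), div_eq_mul_inv, ← lintegral_mul_const' _ _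
      (ENNReal.inv_ne_top.2 (ENNReal.ofReal_pos.2 hapos).ne')]
    refine lintegral_congr fun f => ?_
    rw [ENNReal.ofReal_mul (hP0 f), ENNReal.ofReal_div_of_pos hapos, div_eq_mul_inv, Pi.mul_apply,
      mul_assoc]
  rw [hratio, ENNReal.mul_rpow_half_div (ENNReal.ofReal_pos.2 hapos).ne' ENNReal.ofReal_ne_top]

variable [MeasurableSpace X] {lam : Measure X} {r : X → ℝ}

theorem measurable_mixture (hev : Measurable (Function.uncurry ev)) (m : Measure F) [SFinite m] :
    Measurable (mixture ev m) :=
  (hev.comp measurable_swap).ennreal_ofReal.lintegral_prod_right'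

theorem lintegral_mixture [SFinite lam] (hev : Measurable (Function.uncurry ev))
    (hdens : ∀ f, IsProbDensity lam (ev f)) (m : Measure F) [SFinite m] :
    ∫⁻ x, mixture ev m x ∂lam = m Set.univ := by
  unfold mixture
  rw [lintegral_lintegral_swap (hev.comp measurable_swap).ennreal_ofReal.aemeasurable]
  simp [(hdens _).lintegral_ofReal]

theorem ae_mixture_lt_top [SFinite lam] (hev : Measurable (Function.uncurry ev))
    (hdens : ∀ f, IsProbDensity lam (ev f)) (m : Measure F) [IsFiniteMeasure m] :
    ∀ᵐ x ∂lam, mixture ev m x < ⊤ :=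
  ae_lt_top (measurable_mixture hev m) (by simp [lintegral_mixture hev hdens])

theorem isProbDensity_toReal_mixture [SFinite lam] (hev : Measurable (Function.uncurry ev))
    (hdens : ∀ f, IsProbDensity lam (ev f)) (m : Measure F) [IsProbabilityMeasure m] :
    IsProbDensity lam fun x => (mixture ev m x).toReal := by
  refine ⟨fun _ => ENNReal.toReal_nonneg, ?_⟩
  rw [integral_toReal (measurable_mixture hev m).aemeasurable, lintegral_mixture hev hdens,
    measure_univ, ENNReal.toReal_one]
  exact ae_mixture_lt_top hev hdens m

theorem lintegral_mixture_rpow_mul_eq_ofReal_affinity [SFinite lam]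
    (hev : Measurable (Function.uncurry ev)) (hdens : ∀ f, IsProbDensity lam (ev f))
    (m : Measure F) [IsProbabilityMeasure m]
    (hr : IsProbDensity lam r) :
    ∫⁻ x, mixture ev m x ^ (1 / 2 : ℝ) * ENNReal.ofReal (r x) ^ (1 / 2 : ℝ) ∂lam
      = ENNReal.ofReal (affinity lam (fun x => (mixture ev m x).toReal) r) := by
  rw [(isProbDensity_toReal_mixture hev hdens m).ofReal_affinity hr]
  refine lintegral_congr_ae ?_
  filter_upwards [ae_mixture_lt_top hev hdens m] with x hx
  rw [ENNReal.ofReal_toReal hx.ne]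

theorem le_affinity_mixture [SFinite lam] (hev : Measurable (Function.uncurry ev))
    (hdens : ∀ f, IsProbDensity lam (ev f)) {m : Measure F} [IsProbabilityMeasure m]
    (hr : IsProbDensity lam r) {a : ℝ} (ha : ∀ᵐ f ∂m, a ≤ affinity lam (ev f) r) :
    a ≤ affinity lam (fun x => (mixture ev m x).toReal) r := by
  have hjensen : ∀ x, ∫⁻ f, ENNReal.ofReal (ev f x) ^ (1 / 2 : ℝ) ∂m
      ≤ mixture ev m x ^ (1 / 2 : ℝ) := fun x =>
    lintegral_rpow_le_rpow_lintegral (hev.comp measurable_prodMk_right).ennreal_ofReal.aemeasurable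
      (by norm_num) (by norm_num)
  have hmeas : AEMeasurable (Function.uncurry fun f x =>
      ENNReal.ofReal (ev f x) ^ (1 / 2 : ℝ) * ENNReal.ofReal (r x) ^ (1 / 2 : ℝ)) (m.prod lam) :=
    (hev.ennreal_ofReal.pow_const _).aemeasurable.mul
      (hr.integrable.1.aemeasurable.ennreal_ofReal.pow_const _).comp_snd
  rw [← ENNReal.ofReal_le_ofReal_iff (affinity_nonneg _ _),
    ← lintegral_mixture_rpow_mul_eq_ofReal_affinity hev hdens m hr]
  calc ENNReal.ofReal a = ∫⁻ _, ENNReal.ofReal a ∂m := by simp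
    _ ≤ ∫⁻ f, ENNReal.ofReal (affinity lam (ev f) r) ∂m :=
      lintegral_mono_ae (ha.mono fun _ h => ENNReal.ofReal_le_ofReal h)
    _ = ∫⁻ x, (∫⁻ f, ENNReal.ofReal (ev f x) ^ (1 / 2 : ℝ) ∂m)
          * ENNReal.ofReal (r x) ^ (1 / 2 : ℝ) ∂lam := by
      simp_rw [(hdens _).ofReal_affinity hr]
      rw [lintegral_lintegral_swap hmeas]
      exact lintegral_congr fun x => lintegral_mul_const' _ _
        (ENNReal.rpow_ne_top_of_nonneg (by norm_num) ENNReal.ofReal_ne_top)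
    _ ≤ _ := lintegral_mono fun x => mul_le_mul_left (hjensen x) _

theorem hellinger_mixture_le [SFinite lam] (hev : Measurable (Function.uncurry ev))
    (hdens : ∀ f, IsProbDensity lam (ev f)) {m : Measure F} [IsProbabilityMeasure m]
    (hr : IsProbDensity lam r) {δ : ℝ}
    (hball : ∀ᵐ f ∂m, hellinger lam (ev f) r ≤ δ) :
    hellinger lam (fun x => (mixture ev m x).toReal) r ≤ δ := by
  obtain ⟨f, hf⟩ := hball.exists
  have hδ : 0 ≤ δ := (hellinger_nonneg _ _).trans hf
  refine ((isProbDensity_toReal_mixture hev hdens m).hellinger_le_iff hr hδ).2 ?_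
  exact le_affinity_mixture hev hdens hr
    (hball.mono fun f hf => ((hdens f).hellinger_le_iff hr hδ).1 hf)

theorem affinity_mixture_le [SFinite lam] (hev : Measurable (Function.uncurry ev))
    (hdens : ∀ f, IsProbDensity lam (ev f)) {m : Measure F} [IsProbabilityMeasure m]
    (hr : IsProbDensity lam r) {fc : F} {ε δ : ℝ} (hδε : δ ≤ ε)
    (hball : ∀ᵐ f ∂m, hellinger lam (ev f) (ev fc) ≤ δ) (hfar : ε < hellinger lam (ev fc) r) :
    affinity lam (fun x => (mixture ev m x).toReal) r ≤ 1 - (ε - δ) ^ 2 / 2 := by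
  have hq := isProbDensity_toReal_mixture hev hdens m
  have hnear := hellinger_mixture_le hev hdens (hdens fc) hball
  have htri := (hdens fc).hellinger_triangle hq hr
  refine (hq.le_hellinger_iff hr (sub_nonneg.2 hδε)).1 ?_
  linarith [hellinger_comm (lam := lam) (ev fc) fun x => (mixture ev m x).toReal]

theorem lintegral_mixture_rpow_mul_le [SFinite lam] (hev : Measurable (Function.uncurry ev))
    (hdens : ∀ f, IsProbDensity lam (ev f)) {m : Measure F} [SFinite m]
    (hr : IsProbDensity lam r) {fc : F} {ε δ : ℝ} (hδε : δ ≤ ε)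
    (hball : ∀ᵐ f ∂m, hellinger lam (ev f) (ev fc) ≤ δ) (hfar : ε < hellinger lam (ev fc) r) :
    ∫⁻ x, mixture ev m x ^ (1 / 2 : ℝ) * ENNReal.ofReal (r x) ^ (1 / 2 : ℝ) ∂lam
      ≤ m Set.univ ^ (1 / 2 : ℝ) * ENNReal.ofReal (1 - (ε - δ) ^ 2 / 2) := by
  rcases eq_or_ne m 0 with rfl | hm0
  · simp [mixture]
  have : NeZero m := ⟨hm0⟩
  obtain ⟨f, hf⟩ := hball.exists
  have hδ : 0 ≤ δ := (hellinger_nonneg _ _).trans hf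
  have hc := (hdens fc).one_sub_sq_div_two_pos hr hδ hδε hfar
  set C := m Set.univ
  rcases eq_or_ne C ⊤ with hC | hC
  · rw [hC, ENNReal.top_rpow_of_pos (by norm_num), ENNReal.top_mul (ENNReal.ofReal_pos.2 hc).ne']
    exact le_top
  have : IsFiniteMeasure m := ⟨lt_top_iff_ne_top.2 hC⟩
  have hmix : ∀ x, mixture ev m x = C * mixture ev (C⁻¹ • m) x := fun x => by
    rw [mixture, mixture, lintegral_smul_measure, smul_eq_mul, ← mul_assoc,
      ENNReal.mul_inv_cancel (Measure.measure_univ_ne_zero.2 hm0) hC, one_mul]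
  calc ∫⁻ x, mixture ev m x ^ (1 / 2 : ℝ) * ENNReal.ofReal (r x) ^ (1 / 2 : ℝ) ∂lam
      = C ^ (1 / 2 : ℝ) * ∫⁻ x, mixture ev (C⁻¹ • m) x ^ (1 / 2 : ℝ)
          * ENNReal.ofReal (r x) ^ (1 / 2 : ℝ) ∂lam := by
        simp_rw [hmix, ENNReal.mul_rpow_of_nonneg _ _ (by norm_num : (0 : ℝ) ≤ 1 / 2), mul_assoc]
        exact lintegral_const_mul' _ _ (ENNReal.rpow_ne_top_of_nonneg (by norm_num) hC)
    _ = C ^ (1 / 2 : ℝ) * ENNReal.ofReal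
          (affinity lam (fun x => (mixture ev (C⁻¹ • m) x).toReal) r) := by
        rw [lintegral_mixture_rpow_mul_eq_ofReal_affinity hev hdens _ hr]
    _ ≤ C ^ (1 / 2 : ℝ) * ENNReal.ofReal (1 - (ε - δ) ^ 2 / 2) := by
        gcongr
        exact affinity_mixture_le hev hdens hr hδε
          (Measure.smul_absolutelyContinuous.ae_le hball) hfar

theorem lintegral_rpow_lintegral_mul_div_le [SFinite lam]
    (hev : Measurable (Function.uncurry ev)) (hdens : ∀ f, IsProbDensity lam (ev f))
    {m : Measure F} [SFinite m] {f₀ : X → ℝ} (hf₀ : Measurable f₀) (hf₀d : IsProbDensity lam f₀)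
    {fc : F} {ε δ : ℝ} (hδε : δ ≤ ε) (hball : ∀ᵐ f ∂m, hellinger lam (ev f) (ev fc) ≤ δ)
    (hfar : ε < hellinger lam (ev fc) f₀) {P : F → ℝ} (hP : Measurable P) (hP0 : ∀ f, 0 ≤ P f) :
    ∫⁻ x, (∫⁻ f, ENNReal.ofReal (P f * (ev f x / f₀ x)) ∂m) ^ (1 / 2 : ℝ)
        ∂lam.withDensity (fun x => ENNReal.ofReal (f₀ x))
      ≤ (∫⁻ f, ENNReal.ofReal (P f) ∂m) ^ (1 / 2 : ℝ) * ENNReal.ofReal (1 - (ε - δ) ^ 2 / 2) := by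
  rw [lintegral_withDensity_eq_lintegral_mul_non_measurable _ hf₀.ennreal_ofReal
    (.of_forall fun _ => ENNReal.ofReal_lt_top)]
  simp only [Pi.mul_apply, ofReal_mul_rpow_lintegral_div_eq_mixture m hP hP0 _ (hf₀d.1 _)]
  convert lintegral_mixture_rpow_mul_le hev hdens hf₀d hδε
    ((withDensity_absolutelyContinuous _ _).ae_le hball) hfar using 2
  rw [withDensity_apply _ MeasurableSet.univ, Measure.restrict_univ]

end Mixture

section Likelihood

variable {X F Ω : Type*} [MeasurableSpace X] [MeasurableSpace F] [MeasurableSpace Ω]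
  {lam : Measure X} {ev : F → X → ℝ} {f₀ : X → ℝ} {ν : Measure Ω} {Xs : ℕ → Ω → X}

theorem lintegral_rpow_likelihood_le [IsProbabilityMeasure ν]
    (hev : Measurable (Function.uncurry ev)) (hev0 : ∀ f x, 0 ≤ ev f x)
    (hf₀ : Measurable f₀) (hf₀0 : ∀ x, 0 ≤ f₀ x) (hXs : ∀ i, Measurable (Xs i))
    (hindep : iIndepFun Xs ν)
    (hlaw : ∀ i, ν.map (Xs i) = lam.withDensity fun x => ENNReal.ofReal (f₀ x))
    (m : Measure F) [SFinite m] {c : ℝ≥0∞} (hc : c ≠ ⊤)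
    (hstep : ∀ P : F → ℝ, Measurable P → (∀ f, 0 ≤ P f) →
      ∫⁻ x, (∫⁻ f, ENNReal.ofReal (P f * (ev f x / f₀ x)) ∂m) ^ (1 / 2 : ℝ)
          ∂lam.withDensity (fun x => ENNReal.ofReal (f₀ x))
        ≤ (∫⁻ f, ENNReal.ofReal (P f) ∂m) ^ (1 / 2 : ℝ) * c) (k : ℕ) :
    ∫⁻ ω, (∫⁻ f, ENNReal.ofReal (∏ i ∈ Finset.range k, ev f (Xs i ω) / f₀ (Xs i ω)) ∂m)
        ^ (1 / 2 : ℝ) ∂ν ≤ m Set.univ ^ (1 / 2 : ℝ) * c ^ k := by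
  induction k with
  | zero => simp
  | succ k ih =>
    -- the uncurried form that `fun_prop` can use
    have hev' : Measurable fun q : F × X => ev q.1 q.2 := hev
    let P : (Finset.range k → X) → F → ℝ := fun v f => ∏ i, ev f (v i) / f₀ (v i)
    have hP0 : ∀ v f, 0 ≤ P v f := fun v f =>
      Finset.prod_nonneg fun i _ => div_nonneg (hev0 _ _) (hf₀0 _)
    have hprod : ∀ g : ℕ → ℝ, ∏ i ∈ Finset.range k, g i = ∏ i : Finset.range k, g i :=
      fun g => (Finset.prod_coe_sort _ g).symm
    -- indexed by the subtype of `range k`, the form produced by `iIndepFun.indepFun_finset`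
    let V : Ω → (Finset.range k → X) := fun ω i => Xs i ω
    have hV : Measurable V := measurable_pi_lambda _ fun i => hXs i
    have hVX : IndepFun V (Xs k) ν :=
      (hindep.indepFun_finset _ {k} (by simp) hXs).comp measurable_id
        (measurable_pi_apply ⟨k, Finset.mem_singleton_self k⟩)
    have hH : Measurable fun p : (Finset.range k → X) × X =>
        (∫⁻ f, ENNReal.ofReal (P p.1 f * (ev f p.2 / f₀ p.2)) ∂m) ^ (1 / 2 : ℝ) := by
      have h : Measurable fun q : ((Finset.range k → X) × X) × F =>
          ENNReal.ofReal (P q.1.1 q.2 * (ev q.2 q.1.2 / f₀ q.1.2)) := by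
        fun_prop
      exact h.lintegral_prod_right'.pow_const _
    calc ∫⁻ ω, (∫⁻ f, ENNReal.ofReal (∏ i ∈ Finset.range (k + 1), ev f (Xs i ω) / f₀ (Xs i ω)) ∂m)
          ^ (1 / 2 : ℝ) ∂ν
        = ∫⁻ ω, (∫⁻ f, ENNReal.ofReal (P (V ω) f * (ev f (Xs k ω) / f₀ (Xs k ω))) ∂m)
          ^ (1 / 2 : ℝ) ∂ν := by
          simp only [Finset.prod_range_succ, hprod, P, V]
      _ ≤ (∫⁻ ω, (∫⁻ f, ENNReal.ofReal (P (V ω) f) ∂m) ^ (1 / 2 : ℝ) ∂ν) * c :=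
          hVX.lintegral_comp_le hV (hXs k) hH hc fun v => by
            rw [hlaw]
            exact hstep (P v) (by fun_prop) (hP0 v)
      _ ≤ m Set.univ ^ (1 / 2 : ℝ) * c ^ (k + 1) := by
          rw [pow_succ, ← mul_assoc]
          gcongr
          simpa only [hprod] using ih

end Likelihood

theorem stmt5_general {X : Type*} [MeasurableSpace X]
    (lam : Measure X) [SigmaFinite lam]
    {F : Type*} [MeasurableSpace F] (ev : F → X → ℝ)
    (hev : Measurable (Function.uncurry ev))
    (hdens : ∀ f, (∀ x, 0 ≤ ev f x) ∧ ∫ x, ev f x ∂lam = 1)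
    (Pr : Measure F) [IsProbabilityMeasure Pr]
    (f₀ : X → ℝ) (hf₀ : Measurable f₀ ∧ (∀ x, 0 ≤ f₀ x) ∧ ∫ x, f₀ x ∂lam = 1)
    {Ω : Type*} [MeasurableSpace Ω] (ν : Measure Ω) [IsProbabilityMeasure ν]
    (Xs : ℕ → Ω → X) (hXmeas : ∀ i, Measurable (Xs i))
    (hindep : iIndepFun Xs ν)
    (hlaw : ∀ i, Measure.map (Xs i) ν = lam.withDensity (fun x => ENNReal.ofReal (f₀ x)))
    (n : ℕ) (εn δn : ℝ) (hδε : δn < εn)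
    (A : Set F) (hAmeas : MeasurableSet A)
    (hAsub : ∀ f ∈ A, εn < hellinger lam (ev f) f₀)
    (hAball : ∃ fc ∈ A, ∀ f ∈ A, hellinger lam (ev f) (ev fc) ≤ δn) :
    ∫⁻ ω, (∫⁻ f in A,
        ENNReal.ofReal (∏ i ∈ Finset.range (n + 1), ev f (Xs i ω) / f₀ (Xs i ω)) ∂Pr)
          ^ ((1 : ℝ)/2) ∂ν
      ≤ (Pr A) ^ ((1 : ℝ)/2) *
          ENNReal.ofReal ((1 - (εn - δn) ^ 2 / 2) ^ (n + 1)) := by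
  obtain ⟨fc, hfcA, hball⟩ := hAball
  have hdens : ∀ f, IsProbDensity lam (ev f) := hdens
  have hf₀d : IsProbDensity lam f₀ := hf₀.2
  have hδ : 0 ≤ δn := (hellinger_nonneg _ _).trans (hball fc hfcA)
  have hc := (hdens fc).one_sub_sq_div_two_pos hf₀d hδ hδε.le (hAsub fc hfcA)
  rw [ENNReal.ofReal_pow hc.le, ← Measure.restrict_apply_univ]
  refine lintegral_rpow_likelihood_le hev (fun f => (hdens f).1) hf₀.1 hf₀d.1 hXmeas hindep hlaw
    _ ENNReal.ofReal_ne_top (fun P hP hP0 => ?_) (n + 1)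
  exact lintegral_rpow_lintegral_mul_div_le hev hdens hf₀.1 hf₀d hδε.le
    ((ae_restrict_iff' hAmeas).2 (.of_forall hball)) (hAsub fc hfcA) hP hP0

/-- If every `f ∈ A` has `h(f,f₀) > ε_n` and `A` is contained in a Hellinger ball of
radius `δ_n < ε_n` centered at some `f_c ∈ A`, then with `γ_n = ε_n − δ_n`,
`E(L^{(n)}_{n+1}) ≤ √(Π(A)) (1 − γ_n²/2)^{n+1}`, where
`L^{(n)}_{k} = (∫_A R_k(f) Π(df))^{1/2}` and `R_k(f) = Π_{i<k} f(X_i)/f₀(X_i)`. -/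
theorem stmt5 {X : Type*} [MeasurableSpace X] [TopologicalSpace X] [PolishSpace X]
    [BorelSpace X] (lam : Measure X) [SigmaFinite lam]
    {F : Type*} [MeasurableSpace F] (ev : F → X → ℝ)
    (hev : Measurable (Function.uncurry ev))
    (hdens : ∀ f, (∀ x, 0 ≤ ev f x) ∧ ∫ x, ev f x ∂lam = 1)
    (Pr : Measure F) [IsProbabilityMeasure Pr]
    (f₀ : X → ℝ) (hf₀ : Measurable f₀ ∧ (∀ x, 0 ≤ f₀ x) ∧ ∫ x, f₀ x ∂lam = 1)
    {Ω : Type*} [MeasurableSpace Ω] (ν : Measure Ω) [IsProbabilityMeasure ν]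
    (Xs : ℕ → Ω → X) (hXmeas : ∀ i, Measurable (Xs i))
    (hindep : iIndepFun Xs ν)
    (hlaw : ∀ i, Measure.map (Xs i) ν = lam.withDensity (fun x => ENNReal.ofReal (f₀ x)))
    (n : ℕ) (εn δn : ℝ) (hδpos : 0 < δn) (hδε : δn < εn)
    (A : Set F) (hAmeas : MeasurableSet A)
    (hAsub : ∀ f ∈ A, εn < hellinger lam (ev f) f₀)
    (hAball : ∃ fc ∈ A, ∀ f ∈ A, hellinger lam (ev f) (ev fc) ≤ δn) :
    ∫⁻ ω, (∫⁻ f in A,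
        ENNReal.ofReal (∏ i ∈ Finset.range (n + 1), ev f (Xs i ω) / f₀ (Xs i ω)) ∂Pr)
          ^ ((1 : ℝ)/2) ∂ν
      ≤ (Pr A) ^ ((1 : ℝ)/2) *
          ENNReal.ofReal ((1 - (εn - δn) ^ 2 / 2) ^ (n + 1)) :=
  stmt5_general lam ev hev hdens Pr f₀ hf₀ ν Xs hXmeas hindep hlaw n εn δn hδε A hAmeas hAsub hAball
end

section
/- Let C > 1, r₀ ∈ ℕ, and let (p_r)_{r≥1} be nonnegative reals with p_r ≤ exp(−4 r log r) for all r ≥ r₀. Then there exists M₀ > 0 such that for every M ≥ M₀, setting ε_n = M (log n)^{1/3} n^{−1/3}, one has exp(−n ε_n²) · Σ_{r=1}^∞ (C/ε_n)^r √(p_r) → 0 as n → +∞ (the series being finite for every sufficiently large n). -/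
/-!
Put `a = C / ε`. For `r ≥ r₀` we have `√p_r ≤ r^(-2r)`, so `a^r √p_r ≤ 2^(-r)` as soon as
`r ≥ max(2, r₀, a)`; bounding the remaining `O(a + r₀)` terms crudely, the series is at most
`B (2a)^(a + r₀ + 2) = B exp((a + r₀ + 2) log(2a))`. Since `a ≍ (n / log n)^(1/3) / M` and
`log(2a) ≤ log n`, this exponent is `O(n^(1/3) (log n)^(2/3))` with a constant not growing
with `M`, while `n ε_n² = M² n^(1/3) (log n)^(2/3)`; so for `M ≥ C + 1` the product is
eventually at most `B exp(-n^(1/3))`.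
-/

open Filter Real

lemma eventually_const_mul_log_rpow_le_rpow {s : ℝ} (hs : 0 < s) (K : ℝ) :
    ∀ᶠ x : ℝ in atTop, K * log x ^ s ≤ x ^ s := by
  filter_upwards [((isLittleO_log_rpow_rpow_atTop s hs).const_mul_left K).bound one_pos,
    eventually_ge_atTop 0] with x hx hx0
  calc K * log x ^ s ≤ ‖K * log x ^ s‖ := le_abs_self _
    _ ≤ 1 * ‖x ^ s‖ := hx
    _ = x ^ s := by rw [one_mul, norm_of_nonneg (rpow_nonneg hx0 s)]

lemma pow_mul_sqrt_le_half_pow {a q : ℝ} {r : ℕ} (ha : 0 ≤ a) (hr : 2 ≤ r) (har : a ≤ r)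
    (hq : q ≤ exp (-4 * r * log r)) : a ^ r * √q ≤ (1 / 2) ^ r := by
  have hr0 : (0 : ℝ) < r := by positivity
  have hrr : exp (r * log r) = (r : ℝ) ^ r := by rw [exp_nat_mul, exp_log hr0]
  have hexp : exp (-4 * r * log r) = (((r : ℝ) ^ r)⁻¹ ^ 2) ^ 2 := by
    calc exp (-4 * r * log r) = exp ((4 : ℕ) * -(r * log r)) := by push_cast; ring_nf
      _ = _ := by rw [exp_nat_mul, exp_neg, hrr, ← pow_mul]
  have hsq : √q ≤ ((r : ℝ) ^ r)⁻¹ ^ 2 :=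
    (sqrt_le_sqrt (hq.trans_eq hexp)).trans_eq (sqrt_sq (by positivity))
  calc a ^ r * √q ≤ (r : ℝ) ^ r * ((r : ℝ) ^ r)⁻¹ ^ 2 := by gcongr
    _ = (1 / r) ^ r := by rw [one_div_pow]; field_simp
    _ ≤ (1 / 2) ^ r := by gcongr; exact_mod_cast hr

section Series

variable {p : ℕ → ℝ} {r₀ : ℕ}

lemma exists_forall_sqrt_le (hp : ∀ r, r₀ ≤ r → p r ≤ exp (-4 * r * log r)) :
    ∃ B ≥ 1, ∀ r, √(p r) ≤ B := by
  refine ⟨1 + ∑ j ∈ Finset.range r₀, √(p j),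
    le_add_of_nonneg_right (Finset.sum_nonneg fun _ _ => sqrt_nonneg _), fun r => ?_⟩
  rcases lt_or_ge r r₀ with hr | hr
  · have := Finset.single_le_sum (fun j _ => sqrt_nonneg (p j)) (Finset.mem_range.2 hr)
    linarith
  · have hp1 : p r ≤ 1 := (hp r hr).trans (exp_le_one_iff.2 (by
      have := log_natCast_nonneg r; have : (0 : ℝ) ≤ r := r.cast_nonneg; nlinarith))
    have := sqrt_le_one.2 hp1
    linarith [Finset.sum_nonneg fun j (_ : j ∈ Finset.range r₀) => sqrt_nonneg (p j)]

lemma pow_mul_sqrt_le_geometric (hp : ∀ r, r₀ ≤ r → p r ≤ exp (-4 * r * log r)) {B a : ℝ}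
    (hB1 : 1 ≤ B) (hB : ∀ r, √(p r) ≤ B) (ha : 1 ≤ a) (r : ℕ) :
    a ^ r * √(p r) ≤ B * (2 * a) ^ (r₀ + 1 + ⌈a⌉₊) * (1 / 2) ^ r := by
  set N := r₀ + 1 + ⌈a⌉₊
  rcases le_or_gt r N with hr | hr
  · calc a ^ r * √(p r) ≤ a ^ N * B :=
          mul_le_mul (pow_le_pow_right₀ ha hr) (hB r) (sqrt_nonneg _) (by positivity)
      _ = B * (2 * a) ^ N * (1 / 2) ^ N := by rw [mul_pow, one_div_pow]; field_simp
      _ ≤ B * (2 * a) ^ N * (1 / 2) ^ r :=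
          mul_le_mul_of_nonneg_left (pow_le_pow_of_le_one (by norm_num) (by norm_num) hr)
            (by positivity)
  · have har : a ≤ r := (Nat.le_ceil a).trans (by exact_mod_cast (by omega : ⌈a⌉₊ ≤ r))
    calc a ^ r * √(p r) ≤ (1 / 2) ^ r :=
          pow_mul_sqrt_le_half_pow (by linarith) (by omega) har (hp r (by omega))
      _ ≤ B * (2 * a) ^ N * (1 / 2) ^ r :=
          le_mul_of_one_le_left (by positivity)
            (one_le_mul_of_one_le_of_one_le hB1 (one_le_pow₀ (by linarith)))

lemma exists_tsum_pow_succ_mul_sqrt_le (hp : ∀ r, r₀ ≤ r → p r ≤ exp (-4 * r * log r)) :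
    ∃ B ≥ 0, ∀ a : ℝ, 1 ≤ a →
      Summable (fun r : ℕ => a ^ (r + 1) * √(p (r + 1))) ∧
        ∑' r : ℕ, a ^ (r + 1) * √(p (r + 1)) ≤ B * (2 * a) ^ (a + (r₀ + 2 : ℝ)) := by
  obtain ⟨B, hB1, hB⟩ := exists_forall_sqrt_le hp
  refine ⟨B, by linarith, fun a ha => ?_⟩
  set N := r₀ + 1 + ⌈a⌉₊
  have hdom (r : ℕ) : a ^ (r + 1) * √(p (r + 1)) ≤ B * (2 * a) ^ N / 2 * (1 / 2) ^ r :=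
    (pow_mul_sqrt_le_geometric hp hB1 hB ha (r + 1)).trans_eq (by ring)
  have hgeom : Summable fun r : ℕ => B * (2 * a) ^ N / 2 * (1 / 2 : ℝ) ^ r :=
    summable_geometric_two.mul_left _
  have hsum : Summable fun r : ℕ => a ^ (r + 1) * √(p (r + 1)) :=
    hgeom.of_nonneg_of_le (fun r => mul_nonneg (pow_nonneg (by linarith) _) (sqrt_nonneg _)) hdom
  refine ⟨hsum, ?_⟩
  have hN : (N : ℝ) ≤ a + (r₀ + 2 : ℝ) := by
    have := Nat.ceil_lt_add_one (zero_le_one.trans ha)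
    simp only [N]; push_cast; linarith
  calc ∑' r : ℕ, a ^ (r + 1) * √(p (r + 1))
      ≤ ∑' r : ℕ, B * (2 * a) ^ N / 2 * (1 / 2 : ℝ) ^ r := hsum.tsum_le_tsum hdom hgeom
    _ = B * (2 * a) ^ N := by rw [tsum_mul_left, tsum_geometric_two]; ring
    _ ≤ B * (2 * a) ^ (a + (r₀ + 2 : ℝ)) := by
        rw [← rpow_natCast]
        gcongr
        linarith

end Series

noncomputable def contractionRate (M x : ℝ) : ℝ := M * log x ^ ((1 : ℝ) / 3) / x ^ ((1 : ℝ) / 3)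

lemma eventually_neg_mul_contractionRate_sq_add_le {C M K : ℝ} (hC : 0 < C) (hCM : C ≤ M)
    (hM : 2 ≤ M) (hK : 0 ≤ K) :
    ∀ᶠ x : ℝ in atTop, 1 ≤ C / contractionRate M x ∧
      -(x * contractionRate M x ^ 2) +
          (C / contractionRate M x + K) * log (2 * (C / contractionRate M x)) ≤
        -x ^ ((1 : ℝ) / 3) := by
  filter_upwards [eventually_const_mul_log_rpow_le_rpow (s := 1 / 3) (by norm_num) (M / C),
    eventually_const_mul_log_rpow_le_rpow (s := 1 / 3) (by norm_num) K,
    (tendsto_rpow_atTop (by norm_num : (0 : ℝ) < 1 / 3)).eventually_ge_atTop 2,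
    tendsto_log_atTop.eventually_ge_atTop 1, eventually_ge_atTop 0] with x hMl hKl ht2 hlog hx
  set t := x ^ ((1 : ℝ) / 3)
  set l := log x ^ ((1 : ℝ) / 3)
  have ht3 : t ^ 3 = x := by
    rw [← rpow_natCast, ← rpow_mul hx]; norm_num
  have hl3 : l ^ 3 = log x := by
    rw [← rpow_natCast, ← rpow_mul (by linarith)]; norm_num
  have hl1 : 1 ≤ l := one_le_rpow hlog (by norm_num)
  have hε : contractionRate M x = M * l / t := rfl
  set a := C / contractionRate M x
  have ha : a = C * t / (M * l) := by simp only [a, hε, div_div_eq_mul_div]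
  have hal : a * l ≤ t := by
    rw [ha, div_mul_eq_mul_div, div_le_iff₀ (by positivity)]
    nlinarith [mul_le_mul_of_nonneg_right hCM (by positivity : 0 ≤ t * l)]
  have ha1 : 1 ≤ a := by
    rw [ha, one_le_div (by positivity)]
    rw [div_mul_eq_mul_div, div_le_iff₀ hC] at hMl
    linarith
  have hlog2a : log (2 * a) ≤ l ^ 3 := by
    rw [hl3]
    have hat : a ≤ t := (le_mul_of_one_le_right (by positivity) hl1).trans hal
    refine log_le_log (by positivity) ?_
    calc 2 * a ≤ 2 * t := by linarith
      _ ≤ t ^ 3 := by nlinarith [mul_le_mul ht2 ht2 zero_le_two (by linarith : (0 : ℝ) ≤ t)]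
      _ = x := ht3
  have hxε : x * contractionRate M x ^ 2 = M ^ 2 * (t * l ^ 2) := by
    rw [hε, ← ht3]; field_simp
  refine ⟨ha1, ?_⟩
  calc -(x * contractionRate M x ^ 2) + (a + K) * log (2 * a)
      ≤ -(M ^ 2 * (t * l ^ 2)) + (a + K) * l ^ 3 := by
        rw [hxε]; gcongr
    _ = -(M ^ 2 * (t * l ^ 2)) + (a * l) * l ^ 2 + (K * l) * l ^ 2 := by ring
    _ ≤ -(M ^ 2 * (t * l ^ 2)) + t * l ^ 2 + t * l ^ 2 := by gcongr
    _ ≤ -t := by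
        have hl2 : 1 ≤ l ^ 2 := one_le_pow₀ hl1
        nlinarith [mul_nonneg (by nlinarith : 0 ≤ M ^ 2 - 4) (by positivity : 0 ≤ t * l ^ 2)]

lemma tendsto_exp_neg_mul_contractionRate_sq_mul_tsum {C : ℝ} (hC : 1 < C) {r₀ : ℕ}
    {p : ℕ → ℝ} (hp : ∀ r, r₀ ≤ r → p r ≤ exp (-4 * r * log r)) {M : ℝ} (hM : C + 1 ≤ M) :
    (∀ᶠ x : ℝ in atTop,
        Summable fun r : ℕ => (C / contractionRate M x) ^ (r + 1) * √(p (r + 1))) ∧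
      Tendsto (fun x : ℝ => exp (-(x * contractionRate M x ^ 2)) *
          ∑' r : ℕ, (C / contractionRate M x) ^ (r + 1) * √(p (r + 1))) atTop (nhds 0) := by
  obtain ⟨B, hB0, hB⟩ := exists_tsum_pow_succ_mul_sqrt_le hp
  have hev := eventually_neg_mul_contractionRate_sq_add_le (C := C) (M := M) (by linarith)
    (by linarith) (by linarith) (by positivity : (0 : ℝ) ≤ r₀ + 2)
  refine ⟨hev.mono fun x hx => (hB _ hx.1).1,
    squeeze_zero' (g := fun x => B * exp (-x ^ ((1 : ℝ) / 3))) ?_ ?_ ?_⟩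
  · filter_upwards [hev] with x hx
    exact mul_nonneg (exp_nonneg _) (tsum_nonneg fun r =>
      mul_nonneg (pow_nonneg (by linarith [hx.1]) _) (sqrt_nonneg _))
  · filter_upwards [hev] with x hx
    obtain ⟨ha1, hexp⟩ := hx
    set a := C / contractionRate M x
    calc exp (-(x * contractionRate M x ^ 2)) * ∑' r : ℕ, a ^ (r + 1) * √(p (r + 1))
        ≤ exp (-(x * contractionRate M x ^ 2)) * (B * (2 * a) ^ (a + (r₀ + 2 : ℝ))) := by
          gcongr; exact (hB a ha1).2
      _ = B * exp (-(x * contractionRate M x ^ 2) + (a + (r₀ + 2)) * log (2 * a)) := by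
          rw [exp_add, rpow_def_of_pos (by positivity), mul_comm (log _)]; ring
      _ ≤ B * exp (-x ^ ((1 : ℝ) / 3)) := by gcongr
  · simpa using (tendsto_exp_neg_atTop_nhds_zero.comp
      (tendsto_rpow_atTop (by norm_num : (0 : ℝ) < 1 / 3))).const_mul B

theorem stmt14_general (C : ℝ) (hC : 1 < C) (r₀ : ℕ) (p : ℕ → ℝ)
    (hp : ∀ r : ℕ, r₀ ≤ r → p r ≤ Real.exp (-4 * (r : ℝ) * Real.log r)) :
    ∃ M₀ > (0 : ℝ), ∀ M ≥ M₀,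
      (∀ᶠ n : ℕ in atTop, Summable (fun r : ℕ =>
        (C / (M * (Real.log n) ^ ((1 : ℝ)/3) / (n : ℝ) ^ ((1 : ℝ)/3))) ^ (r + 1) *
          Real.sqrt (p (r + 1)))) ∧
      Tendsto (fun n : ℕ =>
          Real.exp (-((n : ℝ) *
            (M * (Real.log n) ^ ((1 : ℝ)/3) / (n : ℝ) ^ ((1 : ℝ)/3)) ^ 2)) *
          ∑' r : ℕ,
            (C / (M * (Real.log n) ^ ((1 : ℝ)/3) / (n : ℝ) ^ ((1 : ℝ)/3))) ^ (r + 1) *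
              Real.sqrt (p (r + 1)))
        atTop (nhds 0) := by
  refine ⟨C + 1, by linarith, fun M hM => ?_⟩
  obtain ⟨hsum, hlim⟩ := tendsto_exp_neg_mul_contractionRate_sq_mul_tsum hC hp hM
  exact ⟨tendsto_natCast_atTop_atTop.eventually hsum, hlim.comp tendsto_natCast_atTop_atTop⟩

/-- If `C > 1` and `p_r ≤ exp(−4 r log r)` for all `r ≥ r₀`, then for all sufficiently
large `M`, setting `ε_n = M (log n)^{1/3} n^{−1/3}`, one has
`exp(−n ε_n²) · Σ_{r≥1} (C/ε_n)^r √(p_r) → 0`, the series being summable for every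
sufficiently large `n`. -/
theorem stmt14 (C : ℝ) (hC : 1 < C) (r₀ : ℕ) (p : ℕ → ℝ) (hp0 : ∀ r, 0 ≤ p r)
    (hp : ∀ r : ℕ, r₀ ≤ r → p r ≤ Real.exp (-4 * (r : ℝ) * Real.log r)) :
    ∃ M₀ > (0 : ℝ), ∀ M ≥ M₀,
      (∀ᶠ n : ℕ in atTop, Summable (fun r : ℕ =>
        (C / (M * (Real.log n) ^ ((1 : ℝ)/3) / (n : ℝ) ^ ((1 : ℝ)/3))) ^ (r + 1) *
          Real.sqrt (p (r + 1)))) ∧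
      Tendsto (fun n : ℕ =>
          Real.exp (-((n : ℝ) *
            (M * (Real.log n) ^ ((1 : ℝ)/3) / (n : ℝ) ^ ((1 : ℝ)/3)) ^ 2)) *
          ∑' r : ℕ,
            (C / (M * (Real.log n) ^ ((1 : ℝ)/3) / (n : ℝ) ^ ((1 : ℝ)/3))) ^ (r + 1) *
              Real.sqrt (p (r + 1)))
        atTop (nhds 0) :=
  stmt14_general C hC r₀ p hp
end
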